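/- arXiv:1903.00652 — 2 statements merged into one kernel-verified Lean document; each statement's English description precedes it below -/
import Mathlib

section
/- Let R be an integral domain of characteristic zero and 𝔲 a set of derivations of R, with filtration G_i = {x ∈ R : every composite D_{i+1} ∘ ⋯ ∘ D_1 of i+1 derivations from 𝔲 annihilates x} for i ≥ 0; assume that every element of R lies in some G_i, and for x ≠ 0 let ι(x) = min{i ≥ 0 : x ∈ G_i}. Let K be the fraction field of R. Then the function v on K∖{0} defined by v(x/y) = ι(y) − ι(x) for nonzero x, y ∈ R is well-defined and is an additive valuation: v(f·g) = v(f) + v(g) for all nonzero f, g ∈ K, and v(f + g) ≥ min(v(f), v(g)) whenever f, g, f+g are nonzero. Moreover, if k ⊆ R is a subfield annihilated by every derivation in 𝔲, then v(c) = 0 for every nonzero c ∈ k. -/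
/-- Apply a list of operators to an element, the head of the list being applied first. -/
def iterApp {R : Type*} : List (R → R) → R → R
  | [], x => x
  | D :: Ds, x => iterApp Ds (D x)

/-- A derivation of a commutative ring: an additive map satisfying the Leibniz rule. -/
def IsDerivation {R : Type*} [CommRing R] (D : R → R) : Prop :=
  (∀ a b : R, D (a + b) = D a + D b) ∧ (∀ a b : R, D (a * b) = D a * b + a * D b)

/-- For `i ≥ 0`, the `i`-th Socle piece: elements annihilated by every composite of
`i + 1` derivations from `u`. -/
def SocleGNat {R : Type*} [CommRing R] (u : Set (R → R)) (i : ℕ) : Set R :=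
  {x | ∀ Ds : List (R → R), (∀ D ∈ Ds, D ∈ u) → Ds.length = i + 1 → iterApp Ds x = 0}

/-- `iota u x` is the least `i ≥ 0` with `x ∈ G i`. -/
noncomputable def iota {R : Type*} [CommRing R] (u : Set (R → R)) (x : R) : ℕ :=
  sInf {i : ℕ | x ∈ SocleGNat u i}

/-!
`ι` behaves like a degree. The bound `ι (x + y) ≤ max (ι x) (ι y)` is immediate. By the
Leibniz rule a word `W` of derivations acts on a product through the shuffle product:
`W (x * y) = ∑ W_σ x * W_σᶜ y` over the ways `σ` of splitting `W` into two subwords, so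
`ι (x * y) ≤ ι x + ι y`. For the reverse inequality, order the derivations arbitrarily and
take lexicographically largest words `c`, `d` of lengths `ι x`, `ι y` with `c x ≠ 0`,
`d y ≠ 0`, and let `M` be the largest interleaving of `c` and `d`. A splitting of `M` with a
nonzero term has pieces `≤ c` and `≤ d` that interleave back to `M`, so by maximality the
pieces are exactly `c` and `d`. Hence `M (x * y)` is a positive multiple of `c x * d y`, which
is nonzero in characteristic zero.

So `x ↦ exp (ι x)` is a valuation on `R`. It extends to `K`, and `v` is minus its logarithm.
-/

namespace List

variable {α : Type*}

def maskPick (b : Bool) : List Bool → List α → List α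
  | c :: σ, a :: l => if c = b then a :: maskPick b σ l else maskPick b σ l
  | _, _ => []

def maskMerge : List Bool → List α → List α → List α
  | true :: σ, a :: p, q => a :: maskMerge σ p q
  | false :: σ, p, b :: q => b :: maskMerge σ p q
  | _, _, _ => []

theorem maskPick_subset (b : Bool) (σ : List Bool) (l : List α) : maskPick b σ l ⊆ l := by
  induction σ generalizing l with
  | nil => exact nil_subset l
  | cons c σ ih =>
    obtain _ | ⟨x, l⟩ := l
    · exact nil_subset _
    · unfold maskPick
      split_ifs
      · exact cons_subset_cons x (ih l)
      · exact Subset.trans (ih l) (subset_cons_self x l)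

theorem length_maskPick (b : Bool) {σ : List Bool} {l : List α} (h : σ.length = l.length) :
    (maskPick b σ l).length = σ.count b := by
  induction σ generalizing l with
  | nil => simp [maskPick]
  | cons c σ ih =>
    obtain _ | ⟨x, l⟩ := l
    · simp at h
    · have := ih (Nat.succ_injective h)
      simp only [maskPick, count_cons]
      split_ifs <;> simp_all

theorem maskMerge_maskPick {σ : List Bool} {l : List α} (h : σ.length = l.length) :
    maskMerge σ (maskPick true σ l) (maskPick false σ l) = l := by
  induction σ generalizing l with
  | nil => simp [maskMerge, eq_nil_of_length_eq_zero h.symm]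
  | cons c σ ih =>
    obtain _ | ⟨x, l⟩ := l
    · simp at h
    · cases c <;> simp [maskPick, maskMerge, ih (Nat.succ_injective h)]

theorem maskPick_maskMerge {σ : List Bool} {p q : List α} (hp : σ.count true = p.length)
    (hq : σ.count false = q.length) :
    maskPick true σ (maskMerge σ p q) = p ∧ maskPick false σ (maskMerge σ p q) = q := by
  induction σ generalizing p q with
  | nil => simp_all [maskPick, eq_comm]
  | cons c σ ih =>
    cases c
    · obtain _ | ⟨b, q⟩ := q
      · simp at hq
      · simpa [maskMerge, maskPick] using ih (by simpa using hp) (by simpa using hq)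
    · obtain _ | ⟨a, p⟩ := p
      · simp at hp
      · simpa [maskMerge, maskPick] using ih (by simpa using hp) (by simpa using hq)

theorem length_maskMerge {σ : List Bool} {p q : List α} (hp : σ.count true = p.length)
    (hq : σ.count false = q.length) : (maskMerge σ p q).length = σ.length := by
  induction σ generalizing p q with
  | nil => simp [maskMerge]
  | cons c σ ih =>
    cases c
    · obtain _ | ⟨b, q⟩ := q
      · simp at hq
      · simpa [maskMerge] using ih (by simpa using hp) (by simpa using hq)
    · obtain _ | ⟨a, p⟩ := p
      · simp at hp
      · simpa [maskMerge] using ih (by simpa using hp) (by simpa using hq)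

theorem maskMerge_subset_append (σ : List Bool) (p q : List α) : maskMerge σ p q ⊆ p ++ q := by
  induction σ generalizing p q with
  | nil => exact nil_subset _
  | cons c σ ih =>
    cases c
    · obtain _ | ⟨b, q⟩ := q
      · exact nil_subset _
      · exact cons_subset.2
          ⟨by simp, Subset.trans (ih p q) ((sublist_cons_self b q).append_left p).subset⟩
    · obtain _ | ⟨a, p⟩ := p
      · exact nil_subset _
      · exact cons_subset_cons a (ih p q)

def masks : ℕ → Finset (List Bool)
  | 0 => {[]}
  | n + 1 => (Finset.univ ×ˢ masks n).image fun p => p.1 :: p.2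

theorem mem_masks {σ : List Bool} {n : ℕ} : σ ∈ masks n ↔ σ.length = n := by
  induction n generalizing σ with
  | zero => simp [masks]
  | succ n ih => cases σ <;> simp [masks, ih]

theorem sum_masks_succ {M : Type*} [AddCommMonoid M] (n : ℕ) (F : List Bool → M) :
    ∑ σ ∈ masks (n + 1), F σ =
      ∑ σ ∈ masks n, F (true :: σ) + ∑ σ ∈ masks n, F (false :: σ) := by
  rw [masks, Finset.sum_image fun _ _ _ _ h => Prod.ext (cons.inj h).1 (cons.inj h).2,
    Finset.sum_product, Fintype.sum_bool]

def shuffleProd {R : Type*} [Mul R] [AddCommMonoid R] (f g : List α → R) (w : List α) : R :=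
  ∑ σ ∈ masks w.length, f (maskPick true σ w) * g (maskPick false σ w)

theorem finite_setOf_subset_length_eq (L : List α) (k : ℕ) :
    {w : List α | w ⊆ L ∧ w.length = k}.Finite := by
  have : Finite {a // a ∈ L} := L.finite_toSet.to_subtype
  refine ((finite_length_eq {a // a ∈ L} k).image (map Subtype.val)).subset ?_
  rintro w ⟨hwL, rfl⟩
  lift w to List {a // a ∈ L} using hwL
  exact ⟨w, (length_map _).symm, rfl⟩

section LinearOrder

variable [LinearOrder α]

private theorem cons_le_cons_iff' {a b : α} {l l' : List α} :
    a :: l ≤ b :: l' ↔ a < b ∨ a = b ∧ l ≤ l' := by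
  simp only [← not_lt, cons_lt_cons_iff]
  grind

theorem maskMerge_le_maskMerge (σ : List Bool) {p c q d : List α} (hpc : p ≤ c)
    (hqd : q ≤ d) :
    maskMerge σ p q ≤ maskMerge σ c d := by
  induction σ generalizing p c q d with
  | nil => exact le_rfl
  | cons b σ ih =>
    cases b
    · obtain _ | ⟨a, q⟩ := q
      · exact not_lt.1 (not_lt_nil _)
      obtain _ | ⟨e, d⟩ := d
      · exact absurd (nil_lt_cons a q) (not_lt.2 hqd)
      rcases cons_le_cons_iff'.1 hqd with h | ⟨rfl, h⟩
      · exact (cons_lt_cons_iff.2 (Or.inl h)).le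
      · exact cons_le_cons a (ih hpc h)
    · obtain _ | ⟨a, p⟩ := p
      · exact not_lt.1 (not_lt_nil _)
      obtain _ | ⟨e, c⟩ := c
      · exact absurd (nil_lt_cons a p) (not_lt.2 hpc)
      rcases cons_le_cons_iff'.1 hpc with h | ⟨rfl, h⟩
      · exact (cons_lt_cons_iff.2 (Or.inl h)).le
      · exact cons_le_cons a (ih h hqd)

theorem maskPick_eq_of_maskMerge_le {σ : List Bool} {M c d : List α} (hσ : σ.length = M.length)
    (hc : σ.count true = c.length) (hd : σ.count false = d.length)
    (hpc : maskPick true σ M ≤ c) (hqd : maskPick false σ M ≤ d)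
    (hM : maskMerge σ c d ≤ M) :
    maskPick true σ M = c ∧ maskPick false σ M = d := by
  have hmerge : maskMerge σ c d = M :=
    hM.antisymm ((maskMerge_maskPick hσ).symm.trans_le (maskMerge_le_maskMerge σ hpc hqd))
  rw [← hmerge]
  exact maskPick_maskMerge hc hd

theorem exists_max_of_subset_length_eq {L : List α} {k : ℕ} {P : List α → Prop}
    (h : ∃ w ⊆ L, w.length = k ∧ P w) :
    ∃ c ⊆ L, c.length = k ∧ P c ∧ ∀ w ⊆ L, w.length = k → P w → w ≤ c := by
  obtain ⟨c, ⟨hcL, hck, hc⟩, hmax⟩ :=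
    Set.exists_max_image {w | w ⊆ L ∧ w.length = k ∧ P w} id
    ((finite_setOf_subset_length_eq L k).subset fun w hw => ⟨hw.1, hw.2.1⟩)
    (let ⟨w, hwL, hw⟩ := h; ⟨w, hwL, hw⟩)
  exact ⟨c, hcL, hck, hc, fun w hwL hwk hw => hmax w ⟨hwL, hwk, hw⟩⟩

theorem exists_shuffleProd_ne_zero {R : Type*} [Semiring R] [NoZeroDivisors R] [CharZero R]
    {f g : List α → R} {L : List α} {m n : ℕ}
    (hf : ∀ w ⊆ L, m < w.length → f w = 0) (hg : ∀ w ⊆ L, n < w.length → g w = 0)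
    (hf₀ : ∃ w ⊆ L, w.length = m ∧ f w ≠ 0)
    (hg₀ : ∃ w ⊆ L, w.length = n ∧ g w ≠ 0) :
    ∃ w ⊆ L, w.length = m + n ∧ shuffleProd f g w ≠ 0 := by
  classical
  obtain ⟨c, hcL, hcm, hc, hcmax⟩ := exists_max_of_subset_length_eq hf₀
  obtain ⟨d, hdL, hdn, hd, hdmax⟩ := exists_max_of_subset_length_eq hg₀
  obtain ⟨τ, ⟨hτ, hτm⟩, hτmax⟩ := Set.exists_max_image
    {σ : List Bool | σ.length = m + n ∧ σ.count true = m} (fun σ => maskMerge σ c d)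
    ((finite_length_eq Bool (m + n)).subset fun σ hσ => hσ.1)
    ⟨replicate m true ++ replicate n false, by simp [count_replicate]⟩
  have hτn : τ.count false = n := by have := count_true_add_count_false τ; omega
  set M := maskMerge τ c d
  have hM : M.length = m + n := by rw [length_maskMerge (by omega) (by omega), hτ]
  have hML : M ⊆ L :=
    Subset.trans (maskMerge_subset_append τ c d) (append_subset.2 ⟨hcL, hdL⟩)
  -- A nonzero term other than `f c * g d` would split `M` into pieces `≤ c` and `≤ d`.
  have hterm : ∀ σ ∈ masks (m + n), f (maskPick true σ M) * g (maskPick false σ M) =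
      if maskPick true σ M = c ∧ maskPick false σ M = d then f c * g d else 0 := by
    intro σ hσ
    split_ifs with hσcd
    · rw [hσcd.1, hσcd.2]
    have hσM : σ.length = M.length := by rw [mem_masks.1 hσ, hM]
    set p := maskPick true σ M
    set q := maskPick false σ M
    have hpL : p ⊆ L := Subset.trans (maskPick_subset true σ M) hML
    have hqL : q ⊆ L := Subset.trans (maskPick_subset false σ M) hML
    have hp : p.length = σ.count true := length_maskPick true hσM
    have hq : q.length = σ.count false := length_maskPick false hσM
    have hσpq := count_true_add_count_false σ
    by_cases hpm : m < p.length
    · rw [hf p hpL hpm, zero_mul]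
    by_cases hqn : n < q.length
    · rw [hg q hqL hqn, mul_zero]
    by_contra hpq
    obtain ⟨hfp, hgq⟩ := mul_ne_zero_iff.1 hpq
    exact hσcd <| maskPick_eq_of_maskMerge_le hσM (by omega) (by omega)
      (hcmax p hpL (by omega) hfp) (hdmax q hqL (by omega) hgq)
      (hτmax σ ⟨hσM.trans hM, by omega⟩)
  refine ⟨M, hML, hM, ?_⟩
  rw [shuffleProd, hM, Finset.sum_congr rfl hterm, Finset.sum_ite, Finset.sum_const_zero,
    add_zero, Finset.sum_const, nsmul_eq_mul]
  refine mul_ne_zero (Nat.cast_ne_zero.2 (Finset.card_ne_zero.2 ⟨τ, ?_⟩)) (mul_ne_zero hc hd)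
  exact Finset.mem_filter.2 ⟨mem_masks.2 hτ, maskPick_maskMerge (by omega) (by omega)⟩

end LinearOrder

end List

theorem IsDerivation.map_one_eq_zero {R : Type*} [CommRing R] {D : R → R}
    (hD : IsDerivation D) : D 1 = 0 := by
  simpa using hD.2 1 1

section iterApp

variable {R : Type*}

theorem iterApp_append (v w : List (R → R)) (x : R) :
    iterApp (v ++ w) x = iterApp w (iterApp v x) := by
  induction v generalizing x with
  | nil => rfl
  | cons D v ih => exact ih (D x)

variable [CommRing R] {W : List (R → R)}

theorem iterApp_add (hW : ∀ D ∈ W, IsDerivation D) (x y : R) :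
    iterApp W (x + y) = iterApp W x + iterApp W y := by
  induction W generalizing x y with
  | nil => rfl
  | cons D W ih =>
    rw [iterApp, iterApp, iterApp, (hW D List.mem_cons_self).1 x y]
    exact ih (fun E hE => hW E (List.mem_cons_of_mem D hE)) _ _

theorem iterApp_zero (hW : ∀ D ∈ W, IsDerivation D) : iterApp W (0 : R) = 0 := by
  simpa using iterApp_add hW 0 0

theorem iterApp_mul (hW : ∀ D ∈ W, IsDerivation D) (x y : R) :
    iterApp W (x * y) = List.shuffleProd (iterApp · x) (iterApp · y) W := by
  induction W generalizing x y with
  | nil => simp [List.shuffleProd, List.masks, List.maskPick, iterApp]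
  | cons D W ih =>
    have hW' : ∀ E ∈ W, IsDerivation E := fun E hE => hW E (List.mem_cons_of_mem D hE)
    rw [iterApp, (hW D List.mem_cons_self).2 x y, iterApp_add hW', ih hW', ih hW']
    simp [List.shuffleProd, List.sum_masks_succ, List.maskPick, iterApp]

end iterApp

section iota

variable {R : Type*} [CommRing R] {u : Set (R → R)}

theorem iota_le_of_mem_socleGNat {x : R} {i : ℕ} (h : x ∈ SocleGNat u i) : iota u x ≤ i :=
  Nat.sInf_le h

theorem iota_eq_zero_of_forall_eq_zero {c : R} (h : ∀ D ∈ u, D c = 0) : iota u c = 0 := by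
  refine Nat.le_zero.1 (iota_le_of_mem_socleGNat fun W hW hlen => ?_)
  obtain ⟨D, rfl⟩ := List.length_eq_one_iff.1 hlen
  exact h D (hW D List.mem_cons_self)

theorem exists_iterApp_ne_zero {x : R} (hx : x ≠ 0) :
    ∃ W : List (R → R), (∀ D ∈ W, D ∈ u) ∧ W.length = iota u x ∧
      iterApp W x ≠ 0 := by
  obtain h | h := Nat.eq_zero_or_pos (iota u x)
  · exact ⟨[], by simp, h.symm, hx⟩
  · have : x ∉ SocleGNat u (iota u x - 1) := Nat.notMem_of_lt_sInf (Nat.sub_lt h one_pos)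
    simp only [SocleGNat, Set.mem_ofPred_eq, not_forall] at this
    obtain ⟨W, hWu, hlen, hW⟩ := this
    exact ⟨W, hWu, by omega, hW⟩

variable (hu : ∀ D ∈ u, IsDerivation D)
include hu

theorem iota_one : iota u (1 : R) = 0 :=
  iota_eq_zero_of_forall_eq_zero fun D hD => (hu D hD).map_one_eq_zero

theorem iterApp_eq_zero_of_mem_socleGNat {x : R} {i : ℕ} (hx : x ∈ SocleGNat u i)
    {W : List (R → R)} (hW : ∀ D ∈ W, D ∈ u) (hi : i < W.length) : iterApp W x = 0 := by
  rw [← W.take_append_drop (i + 1), iterApp_append,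
    hx _ (fun D hD => hW D (List.mem_of_mem_take hD)) (by simp; omega),
    iterApp_zero fun D hD => hu D (hW D (List.mem_of_mem_drop hD))]

variable (hexh : ∀ x : R, ∃ i : ℕ, x ∈ SocleGNat u i)
include hexh

theorem iterApp_eq_zero_of_iota_lt {x : R} {W : List (R → R)} (hW : ∀ D ∈ W, D ∈ u)
    (h : iota u x < W.length) : iterApp W x = 0 :=
  iterApp_eq_zero_of_mem_socleGNat hu (Nat.sInf_mem (hexh x)) hW h

theorem iota_add_le (x y : R) : iota u (x + y) ≤ max (iota u x) (iota u y) :=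
  iota_le_of_mem_socleGNat fun W hW hlen => by
    rw [iterApp_add (fun D hD => hu D (hW D hD)),
      iterApp_eq_zero_of_iota_lt hu hexh hW (by omega),
      iterApp_eq_zero_of_iota_lt hu hexh hW (by omega), add_zero]

theorem iota_mul_le (x y : R) : iota u (x * y) ≤ iota u x + iota u y := by
  refine iota_le_of_mem_socleGNat fun W hW hlen => ?_
  rw [iterApp_mul (fun D hD => hu D (hW D hD)), List.shuffleProd]
  refine Finset.sum_eq_zero fun σ hσ => ?_
  have hσW : σ.length = W.length := List.mem_masks.1 hσ
  have hpick : ∀ b, ∀ D ∈ List.maskPick b σ W, D ∈ u :=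
    fun b D hD => hW D (List.maskPick_subset b σ W hD)
  have := List.count_true_add_count_false σ
  by_cases hx : iota u x < (List.maskPick true σ W).length
  · rw [iterApp_eq_zero_of_iota_lt hu hexh (hpick true) hx, zero_mul]
  · rw [iterApp_eq_zero_of_iota_lt hu hexh (hpick false), mul_zero]
    rw [List.length_maskPick _ hσW] at hx ⊢
    omega

theorem le_iota_mul [IsDomain R] [CharZero R] {x y : R} (hx : x ≠ 0) (hy : y ≠ 0) :
    iota u x + iota u y ≤ iota u (x * y) := by
  let : LinearOrder (R → R) := IsWellOrder.linearOrder WellOrderingRel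
  obtain ⟨A, hAu, hA, hAx⟩ := exists_iterApp_ne_zero (u := u) hx
  obtain ⟨B, hBu, hB, hBy⟩ := exists_iterApp_ne_zero (u := u) hy
  have hL : ∀ W ⊆ A ++ B, ∀ D ∈ W, D ∈ u := fun W hW D hD => by
    rcases List.mem_append.1 (hW hD) with h | h
    exacts [hAu D h, hBu D h]
  obtain ⟨W, hWL, hW, hWxy⟩ := List.exists_shuffleProd_ne_zero
    (f := (iterApp · x)) (g := (iterApp · y)) (L := A ++ B)
    (fun w hw => iterApp_eq_zero_of_iota_lt hu hexh (hL w hw))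
    (fun w hw => iterApp_eq_zero_of_iota_lt hu hexh (hL w hw))
    ⟨A, List.subset_append_left A B, hA, hAx⟩ ⟨B, List.subset_append_right A B, hB, hBy⟩
  rw [← iterApp_mul fun D hD => hu D (hL W hWL D hD)] at hWxy
  by_contra! h
  exact hWxy (iterApp_eq_zero_of_iota_lt hu hexh (hL W hWL) (by omega))

theorem iota_mul [IsDomain R] [CharZero R] {x y : R} (hx : x ≠ 0) (hy : y ≠ 0) :
    iota u (x * y) = iota u x + iota u y :=
  (iota_mul_le hu hexh x y).antisymm (le_iota_mul hu hexh hx hy)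

end iota

open WithZero

section valuation

variable {R : Type*} [CommRing R] [IsDomain R] [CharZero R] {u : Set (R → R)}
  (hu : ∀ D ∈ u, IsDerivation D) (hexh : ∀ x : R, ∃ i : ℕ, x ∈ SocleGNat u i)

open Classical in
noncomputable def iotaValuation : Valuation R ℤᵐ⁰ where
  toFun x := if x = 0 then 0 else exp (iota u x : ℤ)
  map_zero' := if_pos rfl
  map_one' := by simp [iota_one hu]
  map_mul' x y := by
    by_cases hx : x = 0
    · simp [hx]
    by_cases hy : y = 0
    · simp [hy]
    simp [hx, hy, iota_mul hu hexh hx hy, exp_add]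
  map_add_le_max' x y := by
    by_cases hxy : x + y = 0
    · simp [hxy]
    by_cases hx : x = 0
    · simp [hx]
    by_cases hy : y = 0
    · simp [hy]
    simp only [hxy, hx, hy, if_false, le_max_iff, exp_le_exp, Nat.cast_le]
    exact le_max_iff.1 (iota_add_le hu hexh x y)

theorem iotaValuation_apply {x : R} (hx : x ≠ 0) :
    iotaValuation hu hexh x = exp (iota u x : ℤ) :=
  if_neg hx

theorem nonZeroDivisors_le_primeCompl_supp_iotaValuation :
    nonZeroDivisors R ≤ (iotaValuation hu hexh).supp.primeCompl := fun x hx => by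
  simp [iotaValuation_apply hu hexh (nonZeroDivisors.ne_zero hx)]

end valuation

/-- There is a well-defined function `v` on the fraction field of `R` with
`v (x / y) = ι y - ι x` for nonzero `x, y ∈ R`, and `v` is an additive valuation:
`v (f * g) = v f + v g` and `v (f + g) ≥ min (v f) (v g)` on nonzero elements.
Moreover, `v` vanishes on the nonzero elements of any subfield of `R` annihilated by
every derivation in `u`. -/
theorem socle_valuation {R : Type*} [CommRing R] [IsDomain R] [CharZero R]
    (u : Set (R → R)) (hu : ∀ D ∈ u, IsDerivation D)
    (hexh : ∀ x : R, ∃ i : ℕ, x ∈ SocleGNat u i) :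
    ∃ v : FractionRing R → ℤ,
      (∀ x y : R, x ≠ 0 → y ≠ 0 →
        v (algebraMap R (FractionRing R) x / algebraMap R (FractionRing R) y) =
          (iota u y : ℤ) - iota u x) ∧
      (∀ f g : FractionRing R, f ≠ 0 → g ≠ 0 → v (f * g) = v f + v g) ∧
      (∀ f g : FractionRing R, f ≠ 0 → g ≠ 0 → f + g ≠ 0 →
        min (v f) (v g) ≤ v (f + g)) ∧
      (∀ k : Subring R, (∀ x ∈ k, x ≠ 0 → ∃ y ∈ k, x * y = 1) →
        (∀ D ∈ u, ∀ c ∈ k, D c = 0) →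
        ∀ c ∈ k, c ≠ 0 → v (algebraMap R (FractionRing R) c) = 0) := by
  set w := (iotaValuation hu hexh).extendToLocalization
    (nonZeroDivisors_le_primeCompl_supp_iotaValuation hu hexh) (FractionRing R)
  have hw : ∀ x : R, x ≠ 0 → w (algebraMap R (FractionRing R) x) = exp (iota u x : ℤ) :=
    fun x hx => by simp [w, iotaValuation_apply hu hexh hx]
  have hw₀ : ∀ {f}, f ≠ 0 → w f ≠ 0 := fun hf => w.ne_zero_iff.2 hf
  refine ⟨fun f => -log (w f), fun x y hx hy => ?_, fun f g hf hg => ?_,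
    fun f g hf hg hfg => ?_, fun k _ hk c hc hc₀ => ?_⟩ <;> dsimp only
  · rw [map_div₀, hw x hx, hw y hy, ← exp_sub, log_exp]
    ring
  · rw [map_mul, log_mul (hw₀ hf) (hw₀ hg)]
    ring
  · rcases le_max_iff.1 (w.map_add f g) with h | h
    · exact (min_le_left _ _).trans (neg_le_neg ((log_le_log (hw₀ hfg) (hw₀ hf)).2 h))
    · exact (min_le_right _ _).trans (neg_le_neg ((log_le_log (hw₀ hfg) (hw₀ hg)).2 h))
  · rw [hw c hc₀, iota_eq_zero_of_forall_eq_zero fun D hD => hk D hD c hc, Nat.cast_zero,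
      log_exp, neg_zero]
end

section
/- Let F′ ⊂ ℝ² be the convex hull of the six points (1,0), (0,1), (−1,1), (−1,0), (0,−1), (1,−1), let h : F′ → ℝ be defined by h(x,y) = 1 − 2x if x ≥ 0 and h(x,y) = 1 − x if x ≤ 0, and let P = {(x,y,t) ∈ ℝ³ : (x,y) ∈ F′ and −1 ≤ t ≤ h(x,y)}, with λ the three-dimensional Lebesgue measure. Then λ(P) = 16/3, ∫_P (h(0,0) − h(x,y) + t) dλ(x,y,t) = −3/8, and ∫_P t dλ(x,y,t) = 3/8. Consequently, (1/λ(P)) ∫_P (h(0,0) − h(x,y) + t) dλ = −9/128 < 0 and (1/λ(P)) ∫_P t dλ = 9/128 > 0. -/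
open MeasureTheory Set

/-- The hexagon with vertices `(1,0), (0,1), (-1,1), (-1,0), (0,-1), (1,-1)`. -/
def F9 : Set (ℝ × ℝ) :=
  convexHull ℝ {(1, 0), (0, 1), (-1, 1), (-1, 0), (0, -1), (1, -1)}

/-- The piecewise linear concave function `h(x,y) = 1 - 2x` for `x ≥ 0` and
`h(x,y) = 1 - x` for `x ≤ 0` (the two expressions agree at `x = 0`). -/
noncomputable def h9 (q : ℝ × ℝ) : ℝ :=
  if 0 ≤ q.1 then 1 - 2 * q.1 else 1 - q.1

/-- The reflexive polytope of a singular Gorenstein toric Fano 3-fold: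
`P = {(x,y,t) : (x,y) ∈ F′, -1 ≤ t ≤ h(x,y)}`. -/
noncomputable def P9 : Set (ℝ × ℝ × ℝ) :=
  {p | (p.1, p.2.1) ∈ F9 ∧ -1 ≤ p.2.2 ∧ p.2.2 ≤ h9 (p.1, p.2.1)}

/-!
Fubini, slicing `P` by `x`: the slice of `F′` at `x` is an interval of length `2 - |x|`, and the
fibre over `(x, y)` is `[-1, h]` with `h = 1 - x` for `x ≤ 0` and `h = 1 - 2x` for `x ≥ 0`. The
reflection `t ↦ h - 1 - t` of each fibre maps `h(0,0) - h + t = 1 - h + t` to `-t`, so the two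
integrals are opposite, and everything reduces to integrating cubic polynomials over `[-1, 0]` and
`[0, 1]`.
-/

theorem integral_cubic (a b c₀ c₁ c₂ c₃ : ℝ) :
    ∫ x in a..b, (c₀ + c₁ * x + c₂ * x ^ 2 + c₃ * x ^ 3) =
      c₀ * (b - a) + c₁ * (b ^ 2 - a ^ 2) / 2 + c₂ * (b ^ 3 - a ^ 3) / 3
        + c₃ * (b ^ 4 - a ^ 4) / 4 := by
  have hi : ∀ f : ℝ → ℝ, Continuous f → IntervalIntegrable f volume a b :=
    fun f hf => hf.intervalIntegrable a b
  rw [intervalIntegral.integral_add (hi _ (by fun_prop)) (hi _ (by fun_prop)),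
    intervalIntegral.integral_add (hi _ (by fun_prop)) (hi _ (by fun_prop)),
    intervalIntegral.integral_add (hi _ (by fun_prop)) (hi _ (by fun_prop))]
  simp only [intervalIntegral.integral_const, intervalIntegral.integral_const_mul, integral_pow,
    smul_eq_mul]
  rw [intervalIntegral.integral_const_mul, integral_id]
  ring

theorem integral_eq_of_eq_cubic {f : ℝ → ℝ} {a b : ℝ} (c₀ c₁ c₂ c₃ : ℝ)
    (hf : ∀ x, f x = c₀ + c₁ * x + c₂ * x ^ 2 + c₃ * x ^ 3) :
    ∫ x in a..b, f x =
      c₀ * (b - a) + c₁ * (b ^ 2 - a ^ 2) / 2 + c₂ * (b ^ 3 - a ^ 3) / 3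
        + c₃ * (b ^ 4 - a ^ 4) / 4 := by
  simp only [hf, integral_cubic]

theorem setIntegral_prod_eq_integral_preimage_mk {α β E : Type*} [MeasurableSpace α]
    [MeasurableSpace β] [NormedAddCommGroup E] [NormedSpace ℝ E] {μ : Measure α} {ν : Measure β}
    [SFinite μ] [SFinite ν] {s : Set (α × β)} (hs : MeasurableSet s) {f : α × β → E}
    (hf : IntegrableOn f s (μ.prod ν)) :
    ∫ p in s, f p ∂μ.prod ν = ∫ x, ∫ y in Prod.mk x ⁻¹' s, f (x, y) ∂ν ∂μ := by
  rw [← integral_indicator hs, integral_prod _ ((integrable_indicator_iff hs).2 hf)]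
  congr 1 with x
  rw [← integral_indicator (measurable_prodMk_left hs)]
  rfl

theorem combination_mem_F9 {a b c d e f : ℝ} (ha : 0 ≤ a) (hb : 0 ≤ b) (hc : 0 ≤ c)
    (hd : 0 ≤ d) (he : 0 ≤ e) (hf : 0 ≤ f) (hs : a + b + c + d + e + f = 1) :
    ((a - c - d + f, b + c - e - f) : ℝ × ℝ) ∈ F9 := by
  have hmem := (convex_convexHull ℝ
      ({(1, 0), (0, 1), (-1, 1), (-1, 0), (0, -1), (1, -1)} : Set (ℝ × ℝ))).sum_mem
    (t := Finset.univ) (w := ![a, b, c, d, e, f])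
    (z := ![(1, 0), (0, 1), (-1, 1), (-1, 0), (0, -1), (1, -1)])
    (fun i _ => by fin_cases i <;> assumption) (by simpa [Fin.sum_univ_six] using hs)
    (fun i _ => subset_convexHull ℝ _ (by fin_cases i <;> simp))
  unfold F9
  convert hmem using 1
  simp [Fin.sum_univ_six]
  constructor <;> ring

theorem F9_eq_setOf_abs_le_one :
    F9 = {q | |q.1| ≤ 1 ∧ |q.2| ≤ 1 ∧ |q.1 + q.2| ≤ 1} := by
  apply Subset.antisymm
  · refine convexHull_min ?_ ?_
    · rintro q hq
      simp only [mem_insert_iff, mem_singleton_iff] at hq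
      rcases hq with rfl | rfl | rfl | rfl | rfl | rfl <;> norm_num
    · rintro p ⟨hp₁, hp₂, hp₃⟩ q ⟨hq₁, hq₂, hq₃⟩ s t hs ht hst
      simp only [abs_le] at *
      simp only [mem_ofPred_eq, Prod.fst_add, Prod.snd_add, Prod.smul_fst, Prod.smul_snd,
        smul_eq_mul]
      refine ⟨⟨?_, ?_⟩, ⟨?_, ?_⟩, ⟨?_, ?_⟩⟩ <;> nlinarith
  · rintro ⟨x, y⟩ ⟨hx, hy, hxy⟩
    simp only [abs_le] at hx hy hxy
    rcases le_total 0 x with hx₀ | hx₀ <;> rcases le_total 0 y with hy₀ | hy₀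
    · convert combination_mem_F9 (a := x + (1 - x - y) / 2) (b := y) (c := 0)
        (d := (1 - x - y) / 2) (e := 0) (f := 0) (by linarith) hy₀ le_rfl (by linarith) le_rfl
        le_rfl (by ring) using 2 <;> ring
    · convert combination_mem_F9 (a := x * (1 + y) + (1 - x) * (1 + y) / 2) (b := 0) (c := 0)
        (d := (1 - x) * (1 + y) / 2) (e := (1 - x) * (-y)) (f := x * (-y)) (by nlinarith) le_rfl
        le_rfl (by nlinarith) (by nlinarith) (by nlinarith) (by ring) using 2 <;> ring
    · convert combination_mem_F9 (a := (1 + x) * (1 - y) / 2) (b := (1 + x) * y) (c := -x * y)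
        (d := -x * (1 - y) + (1 + x) * (1 - y) / 2) (e := 0) (f := 0) (by nlinarith)
        (by nlinarith) (by nlinarith) (by nlinarith) le_rfl le_rfl (by ring) using 2 <;> ring
    · convert combination_mem_F9 (a := (1 + x + y) / 2) (b := 0) (c := 0)
        (d := -x + (1 + x + y) / 2) (e := -y) (f := 0) (by linarith) le_rfl le_rfl
        (by linarith) (by linarith) le_rfl (by ring) using 2 <;> ring

theorem h9_eq_min (q : ℝ × ℝ) : h9 q = min (1 - 2 * q.1) (1 - q.1) := by
  unfold h9
  split_ifs with h
  · rw [min_eq_left (by linarith)]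
  · rw [min_eq_right (by linarith)]

@[fun_prop]
theorem continuous_h9 : Continuous h9 := by
  simp only [funext h9_eq_min]
  fun_prop

theorem isCompact_P9 : IsCompact P9 := by
  have hF : IsClosed F9 := (Set.toFinite _).isCompact_convexHull (𝕜 := ℝ) |>.isClosed
  have hP : IsClosed P9 :=
    (hF.preimage (f := fun p : ℝ × ℝ × ℝ => (p.1, p.2.1)) (by fun_prop)).inter
      ((isClosed_le continuous_const (continuous_snd.comp continuous_snd)).inter
        (isClosed_le (continuous_snd.comp continuous_snd)
          (continuous_h9.comp (f := fun p : ℝ × ℝ × ℝ => (p.1, p.2.1)) (by fun_prop))))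
  refine (isCompact_Icc (a := ((-1 : ℝ), (-1 : ℝ), (-1 : ℝ))) (b := (1, 1, 2))).of_isClosed_subset
      hP ?_
  rintro ⟨x, y, t⟩ ⟨hxy, ht₁, ht₂⟩
  rw [F9_eq_setOf_abs_le_one] at hxy
  obtain ⟨hx, hy, -⟩ := hxy
  simp only [abs_le] at hx hy
  have : t ≤ 1 - x := ht₂.trans (by rw [h9_eq_min]; exact min_le_right _ _)
  exact ⟨⟨hx.1, hy.1, ht₁⟩, ⟨hx.2, hy.2, by linarith⟩⟩

theorem preimage_mk_P9 (x : ℝ) :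
    Prod.mk x ⁻¹' P9 = if x ∈ Icc (-1) 1 then
      Icc (max (-1) (-1 - x)) (min 1 (1 - x)) ×ˢ Icc (-1) (h9 (x, 0)) else ∅ := by
  ext ⟨y, t⟩
  simp only [P9, F9_eq_setOf_abs_le_one, h9_eq_min, abs_le]
  split_ifs with hx
  · simp only [mem_preimage, mem_ofPred_eq, mem_prod, mem_Icc, max_le_iff, le_min_iff]
    constructor
    · rintro ⟨⟨-, ⟨hy₁, hy₂⟩, hxy₁, hxy₂⟩, ht⟩
      exact ⟨⟨⟨hy₁, by linarith⟩, hy₂, by linarith⟩, ht⟩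
    · rintro ⟨⟨⟨hy₁, hy₂⟩, hy₃, hy₄⟩, ht⟩
      exact ⟨⟨hx, ⟨hy₁, hy₃⟩, by linarith, by linarith⟩, ht⟩
  · simp only [mem_preimage, mem_empty_iff_false, iff_false]
    exact fun h => hx h.1.1

theorem volume_real_slice_F9 {x : ℝ} (hx : x ∈ Icc (-1) 1) :
    volume.real (Icc (max (-1) (-1 - x)) (min 1 (1 - x))) = 2 - |x| := by
  obtain ⟨hx₁, hx₂⟩ := hx
  rw [Real.volume_real_Icc]
  rcases le_total 0 x with h | h
  · rw [show max (-1) (-1 - x) = -1 from max_eq_left (by linarith),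
      show min 1 (1 - x) = 1 - x from min_eq_right (by linarith), abs_of_nonneg h,
      max_eq_left (by linarith)]
    ring
  · rw [show max (-1) (-1 - x) = -1 - x from max_eq_right (by linarith),
      show min 1 (1 - x) = 1 from min_eq_left (by linarith), abs_of_nonpos h,
      max_eq_left (by linarith)]
    ring

theorem setIntegral_P9 (f : ℝ → ℝ → ℝ) (hf : IntegrableOn (fun p => f p.1 p.2.2) P9) :
    ∫ p in P9, f p.1 p.2.2 = ∫ x in (-1)..1, (2 - |x|) * ∫ t in (-1)..h9 (x, 0), f x t := by
  rw [Measure.volume_eq_prod] at hf ⊢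
  rw [setIntegral_prod_eq_integral_preimage_mk isCompact_P9.measurableSet hf,
    intervalIntegral.integral_of_le (by norm_num), ← integral_Icc_eq_integral_Ioc,
    ← setIntegral_eq_integral_of_forall_compl_eq_zero]
  · refine setIntegral_congr_fun measurableSet_Icc fun x hx => ?_
    have hh : -1 ≤ h9 (x, 0) := by
      rw [h9_eq_min]
      exact le_min (by linarith [hx.2]) (by linarith [hx.2])
    have hprod := setIntegral_prod_mul (μ := volume) (ν := volume) (fun _ : ℝ => (1 : ℝ)) (f x)
      (Icc (max (-1) (-1 - x)) (min 1 (1 - x))) (Icc (-1) (h9 (x, 0)))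
    simp only [one_mul] at hprod
    rw [preimage_mk_P9, if_pos hx, Measure.volume_eq_prod, hprod, setIntegral_const,
      smul_eq_mul, mul_one, volume_real_slice_F9 hx, intervalIntegral.integral_of_le hh,
      integral_Icc_eq_integral_Ioc]
  · intro x hx
    simp [preimage_mk_P9, hx]

theorem integral_width_mul_comp_h9 {G : ℝ → ℝ} (hG : Continuous G) :
    ∫ x in (-1)..1, (2 - |x|) * G (h9 (x, 0)) =
      (∫ x in (-1)..0, (2 + x) * G (1 - x)) + ∫ x in 0..1, (2 - x) * G (1 - 2 * x) := by
  have hc : Continuous fun x : ℝ => (2 - |x|) * G (h9 (x, 0)) :=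
    (continuous_const.sub continuous_abs).mul (hG.comp (continuous_h9.comp (by fun_prop)))
  rw [← intervalIntegral.integral_add_adjacent_intervals (b := 0) (hc.intervalIntegrable _ _)
    (hc.intervalIntegrable _ _)]
  congr 1 <;> refine intervalIntegral.integral_congr fun x hx => ?_
  · rw [uIcc_of_le (by norm_num)] at hx
    simp only [h9_eq_min, abs_of_nonpos hx.2, sub_neg_eq_add,
      min_eq_right (by linarith [hx.2] : 1 - x ≤ 1 - 2 * x)]
  · rw [uIcc_of_le (by norm_num)] at hx
    simp only [h9_eq_min, abs_of_nonneg hx.1,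
      min_eq_left (by linarith [hx.1] : 1 - 2 * x ≤ 1 - x)]

theorem integral_sub_add_eq_neg_integral_id (a b : ℝ) :
    ∫ t in a..b, (t - (a + b)) = -∫ t in a..b, t := by
  rw [intervalIntegral.integral_sub intervalIntegral.intervalIntegrable_id intervalIntegrable_const,
    intervalIntegral.integral_const, integral_id, smul_eq_mul]
  ring

theorem integrableOn_P9 {f : ℝ × ℝ × ℝ → ℝ} (hf : Continuous f) : IntegrableOn f P9 :=
  hf.continuousOn.integrableOn_compact isCompact_P9

theorem volume_real_P9 : volume.real P9 = 16 / 3 :=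
  calc volume.real P9 = ∫ _ in P9, (1 : ℝ) := by simp
    _ = ∫ x in (-1)..1, (2 - |x|) * ∫ _ in (-1)..h9 (x, 0), (1 : ℝ) :=
      setIntegral_P9 (fun _ _ => 1) (integrableOn_P9 continuous_const)
    _ = ∫ x in (-1)..1, (2 - |x|) * (fun h => h + 1) (h9 (x, 0)) := by simp
    _ = 16 / 3 := by
      rw [integral_width_mul_comp_h9 (G := fun h => h + 1) (by fun_prop),
        integral_eq_of_eq_cubic 4 0 (-1) 0 (fun x => by ring),
        integral_eq_of_eq_cubic 4 (-6) 2 0 (fun x => by ring)]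
      norm_num

theorem volume_P9 : volume P9 = 16 / 3 := by
  rw [← ofReal_measureReal isCompact_P9.measure_lt_top.ne, volume_real_P9,
    ENNReal.ofReal_div_of_pos (by norm_num)]
  norm_num

theorem setIntegral_P9_snd_snd : ∫ p in P9, p.2.2 = 3 / 8 :=
  calc ∫ p in P9, p.2.2 = ∫ x in (-1)..1, (2 - |x|) * ∫ t in (-1)..h9 (x, 0), t :=
      setIntegral_P9 (fun _ t => t) (integrableOn_P9 (by fun_prop))
    _ = ∫ x in (-1)..1, (2 - |x|) * (fun h => (h ^ 2 - 1) / 2) (h9 (x, 0)) := by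
      simp [integral_id]
    _ = 3 / 8 := by
      rw [integral_width_mul_comp_h9 (G := fun h => (h ^ 2 - 1) / 2) (by fun_prop),
        integral_eq_of_eq_cubic 0 (-2) 0 (1 / 2) (fun x => by ring),
        integral_eq_of_eq_cubic 0 (-4) 6 (-2) (fun x => by ring)]
      norm_num

theorem setIntegral_P9_h9_sub_eq_neg :
    ∫ p in P9, (h9 (0, 0) - h9 (p.1, p.2.1) + p.2.2) = -∫ p in P9, p.2.2 := by
  have hf : (fun p : ℝ × ℝ × ℝ => h9 (0, 0) - h9 (p.1, p.2.1) + p.2.2) =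
      fun p => p.2.2 - (-1 + h9 (p.1, 0)) := by
    funext p
    simp only [h9_eq_min, mul_zero, sub_zero, min_self]
    ring
  rw [hf, setIntegral_P9 (fun x t => t - (-1 + h9 (x, 0))) (integrableOn_P9 (by fun_prop)),
    setIntegral_P9 (fun _ t => t) (integrableOn_P9 (by fun_prop)),
    ← intervalIntegral.integral_neg]
  simp only [integral_sub_add_eq_neg_integral_id, mul_neg]

/-- `λ(P) = 16/3`, `∫_P (h(0,0) - h(x,y) + t) = -3/8`, `∫_P t = 3/8`, so the average of
`h(0,0) - h(x,y) + t` over `P` is `-9/128 < 0` and the average of `t` is `9/128 > 0`. -/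
theorem singular_toric_Fano_threefold_invariants :
    volume P9 = 16 / 3 ∧
    (∫ p in P9, (h9 (0, 0) - h9 (p.1, p.2.1) + p.2.2)) = -(3 / 8) ∧
    (∫ p in P9, p.2.2) = 3 / 8 ∧
    (1 / (volume P9).toReal) * (∫ p in P9, (h9 (0, 0) - h9 (p.1, p.2.1) + p.2.2)) =
      -(9 / 128) ∧
    (-(9 / 128) : ℝ) < 0 ∧
    (1 / (volume P9).toReal) * (∫ p in P9, p.2.2) = 9 / 128 ∧
    (0 : ℝ) < 9 / 128 := by
  have hvol : (volume P9).toReal = 16 / 3 := volume_real_P9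
  rw [setIntegral_P9_h9_sub_eq_neg, setIntegral_P9_snd_snd, hvol]
  refine ⟨volume_P9, rfl, rfl, ?_, ?_, ?_, ?_⟩ <;> norm_num
end
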